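/- Let A ∈ ℝ^{n×n} and B ∈ ℝ^{n×m} be such that there exists K ∈ ℝ^{m×n} with (A+BK)^k → 0 as k → ∞, let 𝒞 ⊆ ℝ^{n+m} be a proper C-set, and let S ⊆ ℝⁿ be a C-set. Let (𝒫_k)_{k≥1} be the iterates 𝒫₁ = P_x(𝒞* ⊕ MᵀS)*, 𝒫_{k+1} = P_x(𝒞* ⊕ Mᵀ𝒫_k*)* for k ≥ 1. If either S ⊆ 𝒫₁* or 𝒫₁* ⊆ S, then there exists a proper C-set 𝒫_∞ ⊆ ℝⁿ such that the Hausdorff distance between 𝒫_k and 𝒫_∞ tends to 0 as k → ∞. -/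

import Mathlib

open Pointwise Filter Topology Matrix

noncomputable section

/-- ℝⁿ with the standard (Euclidean) inner product. -/
abbrev Rsp (n : ℕ) := EuclideanSpace ℝ (Fin n)

/-- ℝ^{n+m} realized as the L²-product ℝⁿ × ℝᵐ. -/
abbrev Rsp2 (n m : ℕ) := WithLp 2 (Rsp n × Rsp m)

/-- A C-set: compact, convex, containing the origin. -/
def IsCSet {E : Type*} [NormedAddCommGroup E] [NormedSpace ℝ E] (X : Set E) : Prop :=
  IsCompact X ∧ Convex ℝ X ∧ (0 : E) ∈ X

/-- A proper C-set: a C-set containing the origin in its interior. -/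
def IsProperCSet {E : Type*} [NormedAddCommGroup E] [NormedSpace ℝ E] (X : Set E) : Prop :=
  IsCSet X ∧ (0 : E) ∈ interior X

/-- The polar set 𝒳* = {y : ⟨y,x⟩ ≤ 1 for all x ∈ 𝒳}. -/
def polarSet {E : Type*} [NormedAddCommGroup E] [InnerProductSpace ℝ E] (X : Set E) : Set E :=
  {y | ∀ x ∈ X, inner ℝ y x ≤ (1 : ℝ)}

/-- The Minkowski (gauge) function γ(𝒳,y) = inf{η ≥ 0 : y ∈ η𝒳}. -/
def mgauge {E : Type*} [NormedAddCommGroup E] [NormedSpace ℝ E] (X : Set E) (y : E) : ℝ :=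
  sInf {η : ℝ | 0 ≤ η ∧ y ∈ η • X}

variable {n m : ℕ}

/-- The map M = (A B) : ℝ^{n+m} → ℝⁿ, M(x,u) = Ax + Bu. -/
def Mfwd (A : Matrix (Fin n) (Fin n) ℝ) (B : Matrix (Fin n) (Fin m) ℝ) (w : Rsp2 n m) : Rsp n :=
  Matrix.toEuclideanLin A w.ofLp.1 + Matrix.toEuclideanLin B w.ofLp.2

/-- The transpose map Mᵀ : ℝⁿ → ℝ^{n+m}, Mᵀp = (Aᵀp, Bᵀp). -/
def Mtr (A : Matrix (Fin n) (Fin n) ℝ) (B : Matrix (Fin n) (Fin m) ℝ) (p : Rsp n) : Rsp2 n m :=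
  WithLp.toLp 2 (Matrix.toEuclideanLin Aᵀ p, Matrix.toEuclideanLin Bᵀ p)

/-- The projection P_x : ℝ^{n+m} → ℝⁿ, (x,u) ↦ x. -/
def Pxproj : Rsp2 n m → Rsp n := fun w => w.ofLp.1

/-!
The map `X ↦ P_x (𝒞* ⊕ Mᵀ X)*` is antitone, so `X ↦ P_x (𝒞* ⊕ Mᵀ X*)*` is monotone and either
inclusion between `S` and `𝒫₁*` makes the sequence `(𝒫_k)` monotone. Every `𝒫_k` is a C-set inside
a fixed ball determined by `𝒞`, hence a decreasing sequence converges in Hausdorff distance to its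
intersection and an increasing one to the closure of its union; both limits are C-sets.

The limit is proper because all `𝒫_k` contain a common ball. Choose `K` with `(A + BK)^k → 0`; then
`‖(A + BK)^k‖ ≤ c μ^k` with `μ < 1`. For small `δ`, the states `x` with `‖(A + BK)^k x‖ ≤ δ μ^k`
for all `k` lie in every `𝒫_k`, by induction on `k` with the input `u = K x`: `(x, K x)` is so
small that its pairing with `𝒞*` is at most `1 - μ`, and `(A + BK) x` is `μ` times a state of
the same kind. This set of states contains the ball of radius `δ / c`.
-/

section Polar

variable {E : Type*} [NormedAddCommGroup E] [InnerProductSpace ℝ E]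

theorem zero_mem_polarSet (X : Set E) : (0 : E) ∈ polarSet X := by
  intro x _
  simp

theorem polarSet_antitone : Antitone (polarSet : Set E → Set E) :=
  fun _ _ h _ hy x hx => hy x (h hx)

theorem convex_polarSet (X : Set E) : Convex ℝ (polarSet X) := by
  intro y hy z hz a b ha hb hab x hx
  rw [inner_add_left, real_inner_smul_left, real_inner_smul_left, ← hab]
  have := hy x hx
  have := hz x hx
  nlinarith

theorem isClosed_polarSet (X : Set E) : IsClosed (polarSet X) := by
  have : polarSet X = ⋂ x ∈ X, {y : E | inner ℝ y x ≤ (1 : ℝ)} := by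
    ext y
    simp [polarSet]
  rw [this]
  exact isClosed_biInter fun x _ => isClosed_le (by fun_prop) continuous_const

theorem polarSet_subset_closedBall {X : Set E} {r : ℝ} (hr : 0 < r)
    (h : Metric.closedBall 0 r ⊆ X) : polarSet X ⊆ Metric.closedBall 0 r⁻¹ := by
  intro y hy
  rcases eq_or_ne y 0 with rfl | hy0
  · simpa using hr.le
  have hny : 0 < ‖y‖ := norm_pos_iff.2 hy0
  have hx : (r / ‖y‖) • y ∈ Metric.closedBall 0 r := by
    rw [mem_closedBall_zero_iff, norm_smul, Real.norm_of_nonneg (by positivity),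
      div_mul_cancel₀ _ hny.ne']
  have := hy _ (h hx)
  rw [real_inner_smul_right, real_inner_self_eq_norm_sq] at this
  rw [mem_closedBall_zero_iff, ← one_div, le_div_iff₀' hr]
  calc r * ‖y‖ = r / ‖y‖ * ‖y‖ ^ 2 := by field_simp
    _ ≤ 1 := this

theorem closedBall_subset_polarSet {X : Set E} {R : ℝ} (hR : 0 < R)
    (h : X ⊆ Metric.closedBall 0 R) : Metric.closedBall 0 R⁻¹ ⊆ polarSet X := by
  intro y hy x hx
  rw [mem_closedBall_zero_iff] at hy
  have hx : ‖x‖ ≤ R := mem_closedBall_zero_iff.1 (h hx)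
  calc inner ℝ y x ≤ ‖y‖ * ‖x‖ := real_inner_le_norm y x
    _ ≤ R⁻¹ * R := mul_le_mul hy hx (norm_nonneg x) (by positivity)
    _ = 1 := inv_mul_cancel₀ hR.ne'

end Polar

section CSet

variable {E : Type*} [NormedAddCommGroup E] [NormedSpace ℝ E]

theorem IsCSet.isProperCSet_of_closedBall_subset {X : Set E} (hX : IsCSet X) {ε : ℝ}
    (hε : 0 < ε) (h : Metric.closedBall 0 ε ⊆ X) : IsProperCSet X :=
  ⟨hX, mem_interior_iff_mem_nhds.2 (Filter.mem_of_superset (Metric.closedBall_mem_nhds 0 hε) h)⟩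

theorem isCSet_iInter {ι : Sort*} [Nonempty ι] {X : ι → Set E} (hX : ∀ i, IsCSet (X i)) :
    IsCSet (⋂ i, X i) := by
  obtain ⟨i⟩ := ‹Nonempty ι›
  exact ⟨(hX i).1.of_isClosed_subset (isClosed_iInter fun j => (hX j).1.isClosed)
      (Set.iInter_subset _ i), convex_iInter fun j => (hX j).2.1,
    Set.mem_iInter.2 fun j => (hX j).2.2⟩

theorem isCSet_closure_iUnion [ProperSpace E] {ι : Sort*} [Nonempty ι] {X : ι → Set E}
    (hdir : Directed (· ⊆ ·) X) (hX : ∀ i, IsCSet (X i)) (hb : Bornology.IsBounded (⋃ i, X i)) :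
    IsCSet (closure (⋃ i, X i)) := by
  obtain ⟨i⟩ := ‹Nonempty ι›
  exact ⟨hb.isCompact_closure, (hdir.convex_iUnion fun j => (hX j).2.1).closure,
    subset_closure (Set.mem_iUnion.2 ⟨i, (hX i).2.2⟩)⟩

end CSet

section Hausdorff

open Metric Set

variable {α : Type*} [MetricSpace α]

theorem tendsto_hausdorffDist_of_eventually_le {P : ℕ → Set α} {L : Set α}
    (h : ∀ ε > 0, ∀ᶠ k in atTop, hausdorffDist (P k) L ≤ ε) :
    Tendsto (fun k => hausdorffDist (P k) L) atTop (𝓝 0) := by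
  refine Metric.tendsto_nhds.2 fun ε hε => ?_
  filter_upwards [h (ε / 2) (half_pos hε)] with k hk
  rw [Real.dist_eq, sub_zero, abs_of_nonneg hausdorffDist_nonneg]
  linarith

theorem tendsto_hausdorffDist_iInter {P : ℕ → Set α} (hP : Antitone P)
    (hcpt : ∀ k, IsCompact (P k)) :
    Tendsto (fun k => hausdorffDist (P k) (⋂ j, P j)) atTop (𝓝 0) := by
  refine tendsto_hausdorffDist_of_eventually_le fun ε hε => ?_
  obtain ⟨N, hN⟩ := exists_subset_nhds_of_isCompact hP.directed_ge hcpt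
    fun x hx => isOpen_thickening.mem_nhds (self_subset_thickening hε _ hx)
  filter_upwards [eventually_ge_atTop N] with k hk
  refine hausdorffDist_le_of_mem_dist hε.le (fun x hx => ?_)
    fun y hy => ⟨y, mem_iInter.1 hy k, by simp [hε.le]⟩
  obtain ⟨y, hy, hxy⟩ := mem_thickening_iff.1 (hN (hP hk hx))
  exact ⟨y, hy, hxy.le⟩

theorem tendsto_hausdorffDist_closure_iUnion {P : ℕ → Set α} (hP : Monotone P)
    (hcpt : IsCompact (closure (⋃ j, P j))) :
    Tendsto (fun k => hausdorffDist (P k) (closure (⋃ j, P j))) atTop (𝓝 0) := by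
  refine tendsto_hausdorffDist_of_eventually_le fun ε hε => ?_
  have hcover : closure (⋃ j, P j) ⊆ ⋃ k, thickening ε (P k) := by
    intro x hx
    obtain ⟨y, hy, hxy⟩ := Metric.mem_closure_iff.1 hx ε hε
    obtain ⟨k, hk⟩ := mem_iUnion.1 hy
    exact mem_iUnion.2 ⟨k, mem_thickening_iff.2 ⟨y, hk, hxy⟩⟩
  obtain ⟨N, hN⟩ := hcpt.elim_directed_cover _ (fun k => isOpen_thickening) hcover
    (Monotone.directed_le fun j k h => thickening_subset_of_subset ε (hP h))
  filter_upwards [eventually_ge_atTop N] with k hk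
  refine hausdorffDist_le_of_mem_dist hε.le
    (fun x hx => ⟨x, subset_closure (mem_iUnion.2 ⟨k, hx⟩), by simp [hε.le]⟩) fun y hy => ?_
  obtain ⟨z, hz, hyz⟩ := mem_thickening_iff.1 (hN hy)
  exact ⟨z, hP hk hz, hyz.le⟩

end Hausdorff

section Iterates

variable {α : Type*} [Preorder α] {F : α → α} {P : ℕ → α}

theorem antitone_of_succ_eq (hF : Monotone F) (hP : ∀ k, P (k + 1) = F (P k))
    (h : P 1 ≤ P 0) : Antitone P := by
  refine antitone_nat_of_succ_le fun k => ?_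
  induction k with
  | zero => exact h
  | succ k ih => exact (hP (k + 1)).le.trans ((hF ih).trans (hP k).ge)

theorem monotone_of_succ_eq (hF : Monotone F) (hP : ∀ k, P (k + 1) = F (P k))
    (h : P 0 ≤ P 1) : Monotone P := by
  refine monotone_nat_of_le_succ fun k => ?_
  induction k with
  | zero => exact h
  | succ k ih => exact (hP k).le.trans ((hF ih).trans (hP (k + 1)).ge)

end Iterates

theorem exists_norm_pow_le_mul_geometric {R : Type*} [SeminormedRing R] {a : R}
    (h : Tendsto (fun k : ℕ => a ^ k) atTop (𝓝 0)) :
    ∃ c μ : ℝ, 0 < c ∧ 0 < μ ∧ μ < 1 ∧ ∀ k, ‖a ^ k‖ ≤ c * μ ^ k := by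
  obtain ⟨N, hNa, hN⟩ : ∃ N, ‖a ^ N‖ ≤ 1 / 2 ∧ 0 < N :=
    ((tendsto_norm_zero.comp h).eventually (eventually_le_nhds (by norm_num))).and
      (eventually_gt_atTop 0) |>.exists
  set μ : ℝ := (1 / 2 : ℝ) ^ (N : ℝ)⁻¹
  have hμ : 0 < μ := by positivity
  have hμN : μ ^ N = 1 / 2 := by
    rw [← Real.rpow_natCast, ← Real.rpow_mul (by norm_num),
      inv_mul_cancel₀ (by positivity), Real.rpow_one]
  set B := ∑ r ∈ Finset.range N, ‖a ^ r‖
  refine ⟨2 * B + 1, μ, by positivity, hμ,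
    Real.rpow_lt_one (by norm_num) (by norm_num) (by positivity), fun k => ?_⟩
  induction k using Nat.strong_induction_on with
  | _ k ih =>
  rcases lt_or_ge k N with hk | hk
  · have hB : ‖a ^ k‖ ≤ B :=
      Finset.single_le_sum (fun r _ => norm_nonneg (a ^ r)) (Finset.mem_range.2 hk)
    have hμk : 1 / 2 ≤ μ ^ k := hμN ▸ pow_le_pow_of_le_one hμ.le
      (Real.rpow_le_one (by norm_num) (by norm_num) (by positivity)) hk.le
    nlinarith [mul_le_mul_of_nonneg_left hμk (by positivity : (0 : ℝ) ≤ 2 * B + 1)]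
  · obtain ⟨j, rfl⟩ := Nat.exists_eq_add_of_le hk
    calc ‖a ^ (N + j)‖ ≤ ‖a ^ N‖ * ‖a ^ j‖ := pow_add a N j ▸ norm_mul_le _ _
      _ ≤ 1 / 2 * ((2 * B + 1) * μ ^ j) :=
          mul_le_mul hNa (ih j (by omega)) (norm_nonneg _) (by norm_num)
      _ = (2 * B + 1) * μ ^ (N + j) := by rw [pow_add, hμN]; ring

section OrbitDecay

variable {F : Type*} [NormedAddCommGroup F] [NormedSpace ℝ F]

def orbitDecaySet (T : F →L[ℝ] F) (μ δ : ℝ) : Set F :=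
  {x | ∀ k : ℕ, ‖(T ^ k) x‖ ≤ δ * μ ^ k}

theorem norm_le_of_mem_orbitDecaySet {T : F →L[ℝ] F} {μ δ : ℝ} {x : F}
    (hx : x ∈ orbitDecaySet T μ δ) : ‖x‖ ≤ δ := by
  simpa using hx 0

theorem inv_smul_apply_mem_orbitDecaySet {T : F →L[ℝ] F} {μ δ : ℝ} (hμ : 0 < μ) {x : F}
    (hx : x ∈ orbitDecaySet T μ δ) : μ⁻¹ • T x ∈ orbitDecaySet T μ δ := by
  intro k
  have hTk : (T ^ k) (T x) = (T ^ (k + 1)) x := by rw [pow_succ]; rfl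
  rw [map_smul, hTk, norm_smul,
    Real.norm_of_nonneg (inv_nonneg.2 hμ.le), inv_mul_le_iff₀ hμ]
  calc ‖(T ^ (k + 1)) x‖ ≤ δ * μ ^ (k + 1) := hx (k + 1)
    _ = μ * (δ * μ ^ k) := by ring

theorem closedBall_subset_orbitDecaySet {T : F →L[ℝ] F} {c μ δ : ℝ} (hc : 0 < c)
    (hT : ∀ k, ‖T ^ k‖ ≤ c * μ ^ k) :
    Metric.closedBall 0 (δ / c) ⊆ orbitDecaySet T μ δ := by
  intro x hx k
  rw [mem_closedBall_zero_iff] at hx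
  calc ‖(T ^ k) x‖ ≤ ‖T ^ k‖ * ‖x‖ := (T ^ k).le_opNorm x
    _ ≤ c * μ ^ k * (δ / c) := mul_le_mul (hT k) hx (norm_nonneg x) ((norm_nonneg _).trans (hT k))
    _ = δ * μ ^ k := by field_simp

end OrbitDecay

section Control

variable (A : Matrix (Fin n) (Fin n) ℝ) (B : Matrix (Fin n) (Fin m) ℝ)

theorem inner_Mtr (w : Rsp2 n m) (p : Rsp n) :
    inner ℝ w (Mtr A B p) = inner ℝ (Mfwd A B w) p := by
  have key {k : ℕ} (X : Matrix (Fin n) (Fin k) ℝ) (v : Rsp k) :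
      inner ℝ v (Matrix.toEuclideanLin Xᵀ p) = inner ℝ (Matrix.toEuclideanLin X v) p := by
    rw [← Matrix.conjTranspose_eq_transpose_of_trivial,
      Matrix.toEuclideanLin_conjTranspose_eq_adjoint]
    exact LinearMap.adjoint_inner_right _ _ _
  rw [Mfwd, inner_add_left, ← key A, ← key B]
  rfl

theorem Mfwd_toLp_feedback (K : Matrix (Fin m) (Fin n) ℝ) (x : Rsp n) :
    Mfwd A B (WithLp.toLp 2 (x, Matrix.toEuclideanLin K x)) =
      Matrix.toEuclideanCLM (𝕜 := ℝ) (A + B * K) x := by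
  ext i
  simp [Mfwd, Matrix.ofLp_toEuclideanCLM, Matrix.mulVec_mulVec]

theorem tendsto_toEuclideanCLM_pow {T : Matrix (Fin n) (Fin n) ℝ}
    (h : Tendsto (fun k : ℕ => T ^ k) atTop (𝓝 0)) :
    Tendsto (fun k : ℕ => Matrix.toEuclideanCLM (𝕜 := ℝ) T ^ k) atTop (𝓝 0) := by
  have hcont := LinearMap.continuous_of_finiteDimensional
    (Matrix.toEuclideanCLM (n := Fin n) (𝕜 := ℝ)).toAlgEquiv.toLinearMap
  have := (hcont.tendsto 0).comp h
  simpa only [Function.comp_def, AlgEquiv.toLinearMap_apply, StarAlgEquiv.coe_toAlgEquiv, map_zero,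
    map_pow] using this

theorem isLinearMap_Pxproj : IsLinearMap ℝ (Pxproj : Rsp2 n m → Rsp n) :=
  ⟨fun _ _ => rfl, fun _ _ => rfl⟩

theorem norm_Pxproj_le (w : Rsp2 n m) : ‖Pxproj w‖ ≤ ‖w‖ :=
  WithLp.norm_fst_le _ w

end Control

section DualStep

variable (A : Matrix (Fin n) (Fin n) ℝ) (B : Matrix (Fin n) (Fin m) ℝ) (C : Set (Rsp2 n m))

def dualStep (X : Set (Rsp n)) : Set (Rsp n) :=
  Pxproj '' polarSet (polarSet C + Mtr A B '' X)

theorem dualStep_antitone : Antitone (dualStep A B C) :=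
  fun _ _ h => Set.image_mono (polarSet_antitone (Set.add_subset_add_left (Set.image_mono h)))

variable {A B C}

theorem polarSet_polarSet_add_subset_closedBall {X : Set (Rsp n)} {R : ℝ} (hR : 0 < R)
    (hC : C ⊆ Metric.closedBall 0 R) (hX : (0 : Rsp n) ∈ X) :
    polarSet (polarSet C + Mtr A B '' X) ⊆ Metric.closedBall 0 R := by
  have hMtr0 : (0 : Rsp2 n m) ∈ Mtr A B '' X := ⟨0, hX, by simp [Mtr]⟩
  have hball : Metric.closedBall 0 R⁻¹ ⊆ polarSet C + Mtr A B '' X := fun q hq => by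
    simpa using Set.add_mem_add (closedBall_subset_polarSet hR hC hq) hMtr0
  simpa using polarSet_subset_closedBall (inv_pos.2 hR) hball

theorem dualStep_subset_closedBall {X : Set (Rsp n)} {R : ℝ} (hR : 0 < R)
    (hC : C ⊆ Metric.closedBall 0 R) (hX : (0 : Rsp n) ∈ X) :
    dualStep A B C X ⊆ Metric.closedBall 0 R := by
  rintro _ ⟨w, hw, rfl⟩
  exact mem_closedBall_zero_iff.2 ((norm_Pxproj_le w).trans
    (mem_closedBall_zero_iff.1 (polarSet_polarSet_add_subset_closedBall hR hC hX hw)))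

theorem isCSet_dualStep {X : Set (Rsp n)} {R : ℝ} (hR : 0 < R)
    (hC : C ⊆ Metric.closedBall 0 R) (hX : (0 : Rsp n) ∈ X) : IsCSet (dualStep A B C X) := by
  have hcpt : IsCompact (polarSet (polarSet C + Mtr A B '' X)) :=
    (isCompact_closedBall 0 R).of_isClosed_subset (isClosed_polarSet _)
      (polarSet_polarSet_add_subset_closedBall hR hC hX)
  exact ⟨hcpt.image (WithLp.continuous_fst 2 _ _),
    (convex_polarSet _).is_linear_image isLinearMap_Pxproj,
    0, zero_mem_polarSet _, rfl⟩

theorem mem_dualStep_of_inner_le {X : Set (Rsp n)} {x : Rsp n} (u : Rsp m) {a b : ℝ}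
    (hab : a + b ≤ 1) (hC : ∀ q ∈ polarSet C, inner ℝ (WithLp.toLp 2 (x, u)) q ≤ a)
    (hX : ∀ p ∈ X, inner ℝ (Mfwd A B (WithLp.toLp 2 (x, u))) p ≤ b) :
    x ∈ dualStep A B C X := by
  refine ⟨WithLp.toLp 2 (x, u), ?_, rfl⟩
  rintro _ ⟨q, hq, _, ⟨p, hp, rfl⟩, rfl⟩
  rw [inner_add_right, inner_Mtr]
  linarith [hC q hq, hX p hp]

end DualStep

section Feedback

variable {A : Matrix (Fin n) (Fin n) ℝ} {B : Matrix (Fin n) (Fin m) ℝ} {C : Set (Rsp2 n m)}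

def stateFeedback (K : Matrix (Fin m) (Fin n) ℝ) : Rsp n →L[ℝ] Rsp2 n m :=
  (WithLp.prodContinuousLinearEquiv 2 ℝ (Rsp n) (Rsp m)).symm.toContinuousLinearMap.comp
    ((ContinuousLinearMap.id ℝ _).prod (LinearMap.toContinuousLinearMap (Matrix.toEuclideanLin K)))

theorem stateFeedback_apply (K : Matrix (Fin m) (Fin n) ℝ) (x : Rsp n) :
    stateFeedback K x = WithLp.toLp 2 (x, Matrix.toEuclideanLin K x) := rfl

theorem mem_dualStep_of_closedLoop_inner_le {K : Matrix (Fin m) (Fin n) ℝ} {X : Set (Rsp n)}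
    {x : Rsp n} {r μ : ℝ} (hr : 0 < r) (hrC : Metric.closedBall 0 r ⊆ C)
    (hx : ‖stateFeedback K‖ * ‖x‖ ≤ r * (1 - μ))
    (hX : ∀ p ∈ X, inner ℝ (Matrix.toEuclideanCLM (𝕜 := ℝ) (A + B * K) x) p ≤ μ) :
    x ∈ dualStep A B C X := by
  refine mem_dualStep_of_inner_le (Matrix.toEuclideanLin K x) (sub_add_cancel 1 μ).le
    (fun q hq => ?_) fun p hp => by rw [Mfwd_toLp_feedback]; exact hX p hp
  have hq' : ‖q‖ ≤ r⁻¹ := mem_closedBall_zero_iff.1 (polarSet_subset_closedBall hr hrC hq)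
  rw [← stateFeedback_apply]
  calc inner ℝ (stateFeedback K x) q ≤ ‖stateFeedback K x‖ * ‖q‖ := real_inner_le_norm _ _
    _ ≤ (r * (1 - μ)) * r⁻¹ :=
        mul_le_mul (((stateFeedback K).le_opNorm x).trans hx) hq' (norm_nonneg _)
          ((mul_nonneg (norm_nonneg _) (norm_nonneg x)).trans hx)
    _ = 1 - μ := by field_simp

end Feedback

theorem exists_closedBall_subset_iterates {A : Matrix (Fin n) (Fin n) ℝ}
    {B : Matrix (Fin n) (Fin m) ℝ} {K : Matrix (Fin m) (Fin n) ℝ}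
    (hK : Tendsto (fun k : ℕ => (A + B * K) ^ k) atTop (𝓝 0)) {C : Set (Rsp2 n m)}
    (hC : (0 : Rsp2 n m) ∈ interior C) {S : Set (Rsp n)} (hS : Bornology.IsBounded S)
    {P : ℕ → Set (Rsp n)} (hP0 : P 0 = dualStep A B C S)
    (hPs : ∀ k, P (k + 1) = dualStep A B C (polarSet (P k))) :
    ∃ ε > 0, ∀ k, Metric.closedBall 0 ε ⊆ P k := by
  set T := Matrix.toEuclideanCLM (𝕜 := ℝ) (A + B * K)
  obtain ⟨c, μ, hc, hμ, hμ1, hT⟩ :=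
    exists_norm_pow_le_mul_geometric (tendsto_toEuclideanCLM_pow hK)
  obtain ⟨r, hr, hrC⟩ := Metric.nhds_basis_closedBall.mem_iff.1 (mem_interior_iff_mem_nhds.1 hC)
  obtain ⟨R, hR, hSR⟩ := hS.subset_closedBall_lt 0 0
  obtain ⟨δ₁, hδ₁, hLδ₁⟩ := exists_pos_mul_lt (mul_pos hr (sub_pos.2 hμ1)) ‖stateFeedback K‖
  obtain ⟨δ₂, hδ₂, hRδ₂⟩ := exists_pos_mul_lt one_pos R
  set δ := min δ₁ δ₂
  have hE : ∀ k, orbitDecaySet T μ δ ⊆ P k := by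
    have hsmall : ∀ e ∈ orbitDecaySet T μ δ, ‖stateFeedback K‖ * ‖e‖ ≤ r * (1 - μ) := by
      intro e he
      nlinarith [norm_le_of_mem_orbitDecaySet he, min_le_left δ₁ δ₂, norm_nonneg (stateFeedback K)]
    intro k
    induction k with
    | zero =>
      intro e he
      rw [hP0]
      refine mem_dualStep_of_closedLoop_inner_le hr hrC (hsmall e he) fun s hs => ?_
      calc inner ℝ (T e) s ≤ ‖T e‖ * ‖s‖ := real_inner_le_norm _ _
        _ ≤ (δ * μ) * R := mul_le_mul (by simpa using he 1)
            (mem_closedBall_zero_iff.1 (hSR hs)) (norm_nonneg _) (by positivity)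
        _ = μ * (R * δ) := by ring
        _ ≤ μ * 1 := mul_le_mul_of_nonneg_left
            ((mul_le_mul_of_nonneg_left (min_le_right δ₁ δ₂) hR.le).trans hRδ₂.le) hμ.le
        _ = μ := mul_one μ
    | succ k ih =>
      intro e he
      rw [hPs k]
      refine mem_dualStep_of_closedLoop_inner_le hr hrC (hsmall e he) fun p hp => ?_
      calc inner ℝ (T e) p = μ * inner ℝ p (μ⁻¹ • T e) := by
            rw [real_inner_smul_right, real_inner_comm, mul_inv_cancel_left₀ hμ.ne']
        _ ≤ μ * 1 := mul_le_mul_of_nonneg_left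
            (hp _ (ih (inv_smul_apply_mem_orbitDecaySet hμ he))) hμ.le
        _ = μ := mul_one μ
  exact ⟨δ / c, by positivity, fun k => (closedBall_subset_orbitDecaySet hc hT).trans (hE k)⟩

/-- under strict stabilizability and a monotonicity condition on the
initial condition, the iterates converge in Hausdorff distance to a proper C-set. -/
theorem stmt_14 (n m : ℕ) (A : Matrix (Fin n) (Fin n) ℝ) (B : Matrix (Fin n) (Fin m) ℝ)
    (hstab : ∃ K : Matrix (Fin m) (Fin n) ℝ,
      Tendsto (fun k : ℕ => (A + B * K) ^ k) atTop (nhds 0))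
    (C : Set (Rsp2 n m)) (hC : IsProperCSet C)
    (S : Set (Rsp n)) (hS : IsCSet S)
    (P : ℕ → Set (Rsp n))
    (hP0 : P 0 = Pxproj '' polarSet (polarSet C + Mtr A B '' S))
    (hPs : ∀ k : ℕ, P (k + 1) = Pxproj '' polarSet (polarSet C + Mtr A B '' polarSet (P k)))
    (hmono : S ⊆ polarSet (P 0) ∨ polarSet (P 0) ⊆ S) :
    ∃ Pinf : Set (Rsp n), IsProperCSet Pinf ∧
      Tendsto (fun k : ℕ => Metric.hausdorffDist (P k) Pinf) atTop (nhds 0) := by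
  obtain ⟨K, hK⟩ := hstab
  obtain ⟨R, hR, hCR⟩ := hC.1.1.isBounded.subset_closedBall_lt 0 0
  have hPC : ∀ k, IsCSet (P k) ∧ P k ⊆ Metric.closedBall 0 R := by
    rintro (_ | k)
    · rw [hP0]
      exact ⟨isCSet_dualStep hR hCR hS.2.2, dualStep_subset_closedBall hR hCR hS.2.2⟩
    · rw [hPs k]
      exact ⟨isCSet_dualStep hR hCR (zero_mem_polarSet _),
        dualStep_subset_closedBall hR hCR (zero_mem_polarSet _)⟩
  obtain ⟨ε, hε, hεP⟩ := exists_closedBall_subset_iterates hK hC.2 hS.1.isBounded hP0 hPs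
  have hF : Monotone (dualStep A B C ∘ polarSet) :=
    (dualStep_antitone A B C).comp polarSet_antitone
  rcases hmono with h | h
  · have hP : Antitone P :=
      antitone_of_succ_eq hF hPs ((hPs 0).le.trans ((dualStep_antitone A B C h).trans hP0.ge))
    exact ⟨⋂ k, P k, (isCSet_iInter fun k => (hPC k).1).isProperCSet_of_closedBall_subset hε
      (Set.subset_iInter hεP), tendsto_hausdorffDist_iInter hP fun k => (hPC k).1.1⟩
  · have hP : Monotone P :=
      monotone_of_succ_eq hF hPs (hP0.le.trans ((dualStep_antitone A B C h).trans (hPs 0).ge))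
    have hL : IsCSet (closure (⋃ k, P k)) :=
      isCSet_closure_iUnion hP.directed_le (fun k => (hPC k).1)
        (Metric.isBounded_closedBall.subset (Set.iUnion_subset fun k => (hPC k).2))
    exact ⟨_, hL.isProperCSet_of_closedBall_subset hε
      ((hεP 0).trans (subset_closure.trans' (Set.subset_iUnion P 0))),
      tendsto_hausdorffDist_closure_iUnion hP hL.1⟩
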